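/- arXiv:2401.14223 — 2 statements merged into one kernel-verified Lean document; each statement's English description precedes it below -/
import Mathlib

section
/- In the convex homogeneous setup, the set of rational points of N, i.e. { p ∈ N | ∃ (k : Fin d → ℤ) (T : ℝ), T > 0 ∧ ∇f p = T • k }, is dense in N. (Density of points lying on rational invariant tori, used in the proofs of Proposition 4.1 and Proposition 4.3.) -/
open scoped RealInnerProductSpace
open scoped Topology
open Filter Metric Set

/-- An integer vector regarded as an element of Euclidean space. -/
def intVec {d : ℕ} (k : Fin d → ℤ) : EuclideanSpace ℝ (Fin d) := WithLp.toLp 2 (fun i => (k i : ℝ))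

variable {d : ℕ} {f : EuclideanSpace ℝ (Fin d) → ℝ}

lemma aux_fzero (hf_hom : ∀ t : ℝ, 0 < t → ∀ x, f (t • x) = t * f x) : f 0 = 0 := by
  have h := hf_hom 2 (by norm_num) 0
  simp only [smul_zero] at h
  linarith

lemma aux_line_deriv {p g : EuclideanSpace ℝ (Fin d)} (hg : HasGradientAt f g p)
    (x : EuclideanSpace ℝ (Fin d)) :
    HasDerivAt (fun t : ℝ => f (p + t • x)) ⟪g, x⟫ 0 := by
  have hF := hg.hasFDerivAt
  have hl : HasDerivAt (fun t : ℝ => p + t • x) x 0 := by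
    simpa using ((hasDerivAt_id (0:ℝ)).smul_const x).const_add p
  have h0 : p = p + (0:ℝ) • x := by simp
  rw [h0] at hF
  have := HasFDerivAt.comp_hasDerivAt (0:ℝ) hF hl
  simpa [Function.comp_def, InnerProductSpace.toDual_apply_apply] using this

lemma aux_euler (hf_hom : ∀ t : ℝ, 0 < t → ∀ x, f (t • x) = t * f x)
    {p g : EuclideanSpace ℝ (Fin d)} (hg : HasGradientAt f g p) :
    ⟪g, p⟫ = f p := by
  have hd := (aux_line_deriv hg p)
  rw [hasDerivAt_iff_tendsto_slope] at hd
  have h2 : Tendsto (slope (fun t : ℝ => f (p + t • p)) 0) (𝓝[≠] (0:ℝ)) (𝓝 (f p)) := by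
    apply Tendsto.congr' _ (tendsto_const_nhds (α := ℝ))
    have hmem : Set.Ioo (-1:ℝ) 1 ∈ 𝓝[≠] (0:ℝ) :=
      nhdsWithin_le_nhds (Ioo_mem_nhds (by norm_num) (by norm_num))
    filter_upwards [hmem, self_mem_nhdsWithin] with t ht hne
    have hne' : t ≠ 0 := hne
    have h1t : (0:ℝ) < 1 + t := by linarith [ht.1]
    have hpt : p + t • p = (1 + t) • p := by rw [add_smul, one_smul]
    have : f (p + t • p) = (1 + t) * f p := by rw [hpt, hf_hom _ h1t]
    rw [slope_def_field]
    simp only [this, zero_smul, add_zero, sub_zero]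
    field_simp
    ring
  exact tendsto_nhds_unique hd h2

lemma aux_subadd (hf_hom : ∀ t : ℝ, 0 < t → ∀ x, f (t • x) = t * f x)
    (hf_pos : ∀ x : EuclideanSpace ℝ (Fin d), x ≠ 0 → 0 < f x)
    (hconv : Convex ℝ {x : EuclideanSpace ℝ (Fin d) | f x ≤ 1})
    (x y : EuclideanSpace ℝ (Fin d)) : f (x + y) ≤ f x + f y := by
  rcases eq_or_ne x 0 with rfl | hx
  · simp [aux_fzero hf_hom]
  rcases eq_or_ne y 0 with rfl | hy
  · simp [aux_fzero hf_hom]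
  set a := f x with ha
  set b := f y with hb
  have hapos : 0 < a := hf_pos x hx
  have hbpos : 0 < b := hf_pos y hy
  have habpos : 0 < a + b := by linarith
  have hu : f (a⁻¹ • x) ≤ 1 := by
    rw [hf_hom _ (inv_pos.2 hapos)]
    rw [inv_mul_cancel₀ hapos.ne']
  have hv : f (b⁻¹ • y) ≤ 1 := by
    rw [hf_hom _ (inv_pos.2 hbpos)]
    rw [inv_mul_cancel₀ hbpos.ne']
  have hmem := hconv hu hv (le_of_lt (div_pos hapos habpos)) (le_of_lt (div_pos hbpos habpos))
    (by field_simp)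
  have heq : (a / (a+b)) • a⁻¹ • x + (b / (a+b)) • b⁻¹ • y = (a+b)⁻¹ • (x + y) := by
    rw [smul_smul, smul_smul, smul_add]
    congr 1
    · congr 1; field_simp
    · congr 1; field_simp
  rw [heq] at hmem
  have : f ((a+b)⁻¹ • (x+y)) ≤ 1 := hmem
  rw [hf_hom _ (inv_pos.2 habpos)] at this
  calc f (x + y) = (a + b) * ((a+b)⁻¹ * f (x+y)) := by field_simp
    _ ≤ (a + b) * 1 := by apply mul_le_mul_of_nonneg_left this habpos.le
    _ = a + b := mul_one _

lemma aux_compact (hd : 1 ≤ d) (hf_cont : Continuous f)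
    (hf_hom : ∀ t : ℝ, 0 < t → ∀ x, f (t • x) = t * f x)
    (hf_pos : ∀ x : EuclideanSpace ℝ (Fin d), x ≠ 0 → 0 < f x) :
    IsCompact {x : EuclideanSpace ℝ (Fin d) | f x ≤ 1} := by
  have hS : IsCompact (Metric.sphere (0 : EuclideanSpace ℝ (Fin d)) 1) := isCompact_sphere _ _
  have hSne : (Metric.sphere (0 : EuclideanSpace ℝ (Fin d)) 1).Nonempty := by
    refine ⟨EuclideanSpace.single ⟨0, hd⟩ 1, ?_⟩
    simp [EuclideanSpace.norm_single]
  obtain ⟨x0, hx0S, hmin⟩ := hS.exists_isMinOn hSne hf_cont.continuousOn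
  have hx0 : x0 ≠ 0 := by
    intro h
    rw [h] at hx0S
    simp at hx0S
  have hm : 0 < f x0 := hf_pos x0 hx0
  apply IsCompact.of_isClosed_subset (isCompact_closedBall (0 : EuclideanSpace ℝ (Fin d)) (f x0)⁻¹)
    (isClosed_le hf_cont continuous_const)
  intro x hx
  simp only [Set.mem_setOf_eq] at hx
  rcases eq_or_ne x 0 with rfl | hxne
  · exact Metric.mem_closedBall_self (by positivity)
  · have hr : 0 < ‖x‖ := norm_pos_iff.2 hxne
    have hu : ‖x‖⁻¹ • x ∈ Metric.sphere (0 : EuclideanSpace ℝ (Fin d)) 1 := by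
      simp [norm_smul, abs_of_pos (inv_pos.2 hr), inv_mul_cancel₀ hr.ne']
    have hfu : f x0 ≤ f (‖x‖⁻¹ • x) := hmin hu
    have hfx : f x = ‖x‖ * f (‖x‖⁻¹ • x) := by
      rw [← hf_hom _ hr, smul_smul, mul_inv_cancel₀ hr.ne', one_smul]
    have : ‖x‖ * f x0 ≤ 1 := by
      calc ‖x‖ * f x0 ≤ ‖x‖ * f (‖x‖⁻¹ • x) := by
            exact mul_le_mul_of_nonneg_left hfu hr.le
        _ = f x := hfx.symm
        _ ≤ 1 := hx
    rw [Metric.mem_closedBall, dist_zero_right]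
    have h2 : ‖x‖ ≤ 1 / f x0 := (le_div_iff₀ hm).mpr this
    rwa [one_div] at h2

lemma aux_subgrad (hf_hom : ∀ t : ℝ, 0 < t → ∀ x, f (t • x) = t * f x)
    (hf_pos : ∀ x : EuclideanSpace ℝ (Fin d), x ≠ 0 → 0 < f x)
    (hconv : Convex ℝ {x : EuclideanSpace ℝ (Fin d) | f x ≤ 1})
    {p g : EuclideanSpace ℝ (Fin d)} (hg : HasGradientAt f g p)
    (x : EuclideanSpace ℝ (Fin d)) : ⟪g, x⟫ ≤ f x := by
  have hd := aux_line_deriv hg x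
  rw [hasDerivAt_iff_tendsto_slope] at hd
  have hd' : Tendsto (slope (fun t : ℝ => f (p + t • x)) 0) (𝓝[>] (0:ℝ)) (𝓝 ⟪g, x⟫) :=
    hd.mono_left (nhdsWithin_mono 0 (fun t ht => ne_of_gt ht))
  refine le_of_tendsto hd' ?_
  filter_upwards [self_mem_nhdsWithin] with t ht
  have ht' : (0:ℝ) < t := ht
  rw [slope_def_field]
  simp only [zero_smul, add_zero, sub_zero]
  rw [div_le_iff₀ ht']
  have := aux_subadd hf_hom hf_pos hconv p (t • x)
  rw [hf_hom _ ht'] at this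
  linarith

lemma aux_max {gradf : EuclideanSpace ℝ (Fin d) → EuclideanSpace ℝ (Fin d)}
    (hd : 1 ≤ d) (hf_cont : Continuous f)
    (hf_hom : ∀ t : ℝ, 0 < t → ∀ x, f (t • x) = t * f x)
    (hf_pos : ∀ x : EuclideanSpace ℝ (Fin d), x ≠ 0 → 0 < f x)
    (hf_grad : ∀ x : EuclideanSpace ℝ (Fin d), x ≠ 0 → HasGradientAt f (gradf x) x)
    (v : EuclideanSpace ℝ (Fin d)) (hv : v ≠ 0) :
    ∃ q, f q = 1 ∧ (∀ x, f x ≤ 1 → ⟪x, v⟫ ≤ ⟪q, v⟫) ∧ ∃ T : ℝ, 0 < T ∧ gradf q = T • v := by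
  have hK : IsCompact {x : EuclideanSpace ℝ (Fin d) | f x ≤ 1} :=
    aux_compact hd hf_cont hf_hom hf_pos
  have h0K : (0 : EuclideanSpace ℝ (Fin d)) ∈ {x | f x ≤ 1} := by
    simp [Set.mem_setOf_eq, aux_fzero hf_hom]
  have hcont : ContinuousOn (fun x : EuclideanSpace ℝ (Fin d) => ⟪x, v⟫)
      {x : EuclideanSpace ℝ (Fin d) | f x ≤ 1} :=
    (continuous_id.inner continuous_const).continuousOn
  obtain ⟨q, hqK, hqmax'⟩ := hK.exists_isMaxOn ⟨0, h0K⟩ hcont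
  have hqmax : ∀ x, f x ≤ 1 → ⟪x, v⟫ ≤ ⟪q, v⟫ := fun x hx => hqmax' hx
  simp only [Set.mem_setOf_eq] at hqK
  -- the max value is positive
  have hfv : 0 < f v := hf_pos v hv
  have hx1 : f ((f v)⁻¹ • v) ≤ 1 := by
    rw [hf_hom _ (inv_pos.2 hfv), inv_mul_cancel₀ hfv.ne']
  have hpos : 0 < ⟪q, v⟫ := by
    have := hqmax _ hx1
    rw [real_inner_smul_left] at this
    have hvv : 0 < ⟪v, v⟫ := by
      rw [real_inner_self_eq_norm_sq]
      have hnv : ‖v‖ ≠ 0 := norm_ne_zero_iff.2 hv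
      positivity
    calc (0:ℝ) < (f v)⁻¹ * ⟪v, v⟫ := by positivity
      _ ≤ ⟪q, v⟫ := this
  have hq0 : q ≠ 0 := by
    intro h
    rw [h, inner_zero_left] at hpos
    exact lt_irrefl _ hpos
  -- f q = 1
  have hfq : f q = 1 := by
    by_contra hne
    have hlt : f q < 1 := lt_of_le_of_ne hqK hne
    have hfqpos : 0 < f q := hf_pos q hq0
    have ht1 : 1 < (f q)⁻¹ := (one_lt_inv₀ hfqpos).2 hlt
    have : f ((f q)⁻¹ • q) ≤ 1 := by
      rw [hf_hom _ (by positivity), inv_mul_cancel₀ hfqpos.ne']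
    have h2 := hqmax _ this
    rw [real_inner_smul_left] at h2
    nlinarith
  -- first-order condition
  set h := gradf q with hh
  have hgq : HasGradientAt f h q := hf_grad q hq0
  have heuler : ⟪h, q⟫ = 1 := by rw [aux_euler hf_hom hgq, hfq]
  have hstep : ∀ w, ⟪h, w⟫ < 0 → ⟪w, v⟫ ≤ 0 := by
    intro w hw
    have hder := aux_line_deriv hgq w
    rw [hasDerivAt_iff_tendsto_slope] at hder
    have hev : ∀ᶠ t in 𝓝[>] (0:ℝ), slope (fun t : ℝ => f (q + t • w)) 0 t < 0 :=
      (hder.mono_left (nhdsWithin_mono 0 (fun t ht => ne_of_gt ht))).eventually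
        (eventually_lt_nhds hw)
    obtain ⟨t, hts, htpos⟩ := (hev.and self_mem_nhdsWithin).exists
    have htpos' : (0:ℝ) < t := htpos
    rw [slope_def_field] at hts
    simp only [zero_smul, add_zero, sub_zero] at hts
    have hnum : f (q + t • w) - f q < 0 := by
      rcases div_neg_iff.1 hts with ⟨_, h2⟩ | ⟨h1, _⟩
      · linarith
      · exact h1
    have hlt : f (q + t • w) ≤ 1 := by linarith [hfq.le, hnum]
    have h2 := hqmax _ hlt
    rw [inner_add_left, real_inner_smul_left] at h2
    by_contra hcon
    push_neg at hcon
    nlinarith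
  have hh0 : h ≠ 0 := by
    intro he
    rw [he, inner_zero_left] at heuler
    norm_num at heuler
  have hhh : 0 < ⟪h, h⟫ := by
    rw [real_inner_self_eq_norm_sq]
    have hnh : ‖h‖ ≠ 0 := norm_ne_zero_iff.2 hh0
    positivity
  have hvh : 0 ≤ ⟪h, v⟫ := by
    have hneg : ⟪h, -h⟫ < 0 := by rw [inner_neg_right]; linarith
    have := hstep (-h) hneg
    rw [inner_neg_left] at this
    have hsym : ⟪h, v⟫ = ⟪v, h⟫ := real_inner_comm _ _
    linarith
  have horth : ∀ w, ⟪h, w⟫ = 0 → ⟪w, v⟫ ≤ 0 := by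
    intro w hw
    have key : ∀ ε : ℝ, 0 < ε → ⟪w, v⟫ ≤ ε * ⟪h, v⟫ := by
      intro ε hε
      have hneg : ⟪h, w - ε • h⟫ < 0 := by
        rw [inner_sub_right, hw, real_inner_smul_right]
        nlinarith
      have := hstep _ hneg
      rw [inner_sub_left, real_inner_smul_left] at this
      have hsym : ⟪h, v⟫ = ⟪v, h⟫ := real_inner_comm _ _
      linarith
    have htend : Tendsto (fun ε : ℝ => ε * ⟪h, v⟫) (𝓝[>] (0:ℝ)) (𝓝 0) := by
      have h1 : Tendsto (fun ε : ℝ => ε * ⟪h, v⟫) (𝓝 (0:ℝ)) (𝓝 ((0:ℝ) * ⟪h, v⟫)) :=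
        (continuous_id.mul continuous_const).tendsto 0
      simpa using h1.mono_left nhdsWithin_le_nhds
    refine ge_of_tendsto htend ?_
    filter_upwards [self_mem_nhdsWithin] with ε hε
    exact key ε hε
  have horth' : ∀ w, ⟪h, w⟫ = 0 → ⟪w, v⟫ = 0 := by
    intro w hw
    have h1 := horth w hw
    have h2 := horth (-w) (by rw [inner_neg_right, hw, neg_zero])
    rw [inner_neg_left] at h2
    linarith
  set c := ⟪h, v⟫ / ⟪h, h⟫ with hc
  have hw0 : ⟪h, v - c • h⟫ = 0 := by
    rw [inner_sub_right, real_inner_smul_right, hc, div_mul_cancel₀ _ hhh.ne', sub_self]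
  have hwv := horth' _ hw0
  have hwh : ⟪v - c • h, h⟫ = 0 := by rw [real_inner_comm]; exact hw0
  have hww : ⟪v - c • h, v - c • h⟫ = 0 := by
    rw [inner_sub_right, real_inner_smul_right, hwv, hwh]
    ring
  have hv_eq : v = c • h := by
    have h0 := inner_self_eq_zero.1 hww
    rwa [sub_eq_zero] at h0
  have hcnonneg : 0 ≤ c := div_nonneg hvh hhh.le
  have hcpos : 0 < c := by
    rcases hcnonneg.lt_or_eq with h1 | h1
    · exact h1
    · exfalso
      apply hv
      rw [hv_eq, ← h1, zero_smul]
  refine ⟨q, hfq, hqmax, c⁻¹, inv_pos.2 hcpos, ?_⟩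
  rw [hv_eq, smul_smul, inv_mul_cancel₀ hcpos.ne', one_smul]

lemma aux_strict (hf_hom : ∀ t : ℝ, 0 < t → ∀ x, f (t • x) = t * f x)
    (hf_pos : ∀ x : EuclideanSpace ℝ (Fin d), x ≠ 0 → 0 < f x)
    (hconv : StrictConvex ℝ {x : EuclideanSpace ℝ (Fin d) | f x ≤ 1})
    {p q g : EuclideanSpace ℝ (Fin d)} (hp : f p = 1) (hg : HasGradientAt f g p)
    (hq : f q ≤ 1) (hne : q ≠ p) : ⟪g, q⟫ < 1 := by
  have hconv' : Convex ℝ {x : EuclideanSpace ℝ (Fin d) | f x ≤ 1} := hconv.convex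
  have hsub : ∀ x, ⟪g, x⟫ ≤ f x := aux_subgrad hf_hom hf_pos hconv' hg
  have hle : ⟪g, q⟫ ≤ 1 := (hsub q).trans hq
  rcases hle.lt_or_eq with hlt | heq
  · exact hlt
  exfalso
  have hgp : ⟪g, p⟫ = 1 := by rw [aux_euler hf_hom hg, hp]
  have hg0 : g ≠ 0 := by
    intro he; rw [he, inner_zero_left] at hgp; norm_num at hgp
  have hpK : p ∈ {x : EuclideanSpace ℝ (Fin d) | f x ≤ 1} := le_of_eq hp
  have hqK : q ∈ {x : EuclideanSpace ℝ (Fin d) | f x ≤ 1} := hq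
  have hmid : (1/2 : ℝ) • q + (1/2 : ℝ) • p ∈
      interior {x : EuclideanSpace ℝ (Fin d) | f x ≤ 1} :=
    hconv hqK hpK hne (by norm_num) (by norm_num) (by norm_num)
  rw [mem_interior_iff_mem_nhds, Metric.mem_nhds_iff] at hmid
  obtain ⟨δ, hδ, hball⟩ := hmid
  set w := (1/2 : ℝ) • q + (1/2 : ℝ) • p with hw
  have hgw : ⟪g, w⟫ = 1 := by
    rw [hw, inner_add_right, real_inner_smul_right, real_inner_smul_right, heq, hgp]
    norm_num
  have hng : 0 < ‖g‖ := norm_pos_iff.2 hg0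
  set z := w + (δ / (2 * ‖g‖)) • g with hz
  have hzK : z ∈ {x : EuclideanSpace ℝ (Fin d) | f x ≤ 1} := by
    apply hball
    rw [Metric.mem_ball, dist_eq_norm, hz]
    have : w + (δ / (2 * ‖g‖)) • g - w = (δ / (2 * ‖g‖)) • g := by abel
    rw [this, norm_smul, Real.norm_eq_abs, abs_of_pos (by positivity)]
    have h2 : δ / (2 * ‖g‖) * ‖g‖ = δ / 2 := by
      field_simp
    rw [h2]
    linarith
  have hinz : ⟪g, z⟫ ≤ 1 := (hsub z).trans hzK
  have : ⟪g, z⟫ = 1 + δ / (2 * ‖g‖) * (‖g‖ * ‖g‖) := by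
    rw [hz, inner_add_right, real_inner_smul_right, hgw, real_inner_self_eq_norm_mul_norm]
  have hposterm : 0 < δ / (2 * ‖g‖) * (‖g‖ * ‖g‖) := by positivity
  linarith

/-- **Density of rational points** (used in Propositions 4.1 and 4.3): in the convex
homogeneous setup, the points `p ∈ N = f⁻¹(1)` whose gradient `∇f p` is positively
proportional to an integer vector are dense in `N`. -/
theorem rational_points_dense (d : ℕ) (hd : 1 ≤ d)
    (f : EuclideanSpace ℝ (Fin d) → ℝ)
    (gradf : EuclideanSpace ℝ (Fin d) → EuclideanSpace ℝ (Fin d))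
    (hf_cont : Continuous f)
    (hf_hom : ∀ t : ℝ, 0 < t → ∀ x, f (t • x) = t * f x)
    (hf_pos : ∀ x : EuclideanSpace ℝ (Fin d), x ≠ 0 → 0 < f x)
    (hf_grad : ∀ x : EuclideanSpace ℝ (Fin d), x ≠ 0 → HasGradientAt f (gradf x) x)
    (hgrad_cont : ContinuousOn gradf {x : EuclideanSpace ℝ (Fin d) | x ≠ 0})
    (hconv : StrictConvex ℝ {x : EuclideanSpace ℝ (Fin d) | f x ≤ 1}) :
    f ⁻¹' {1} ⊆
      closure {p : EuclideanSpace ℝ (Fin d) | f p = 1 ∧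
        ∃ (k : Fin d → ℤ) (T : ℝ), 0 < T ∧ gradf p = T • intVec k} := by
  intro p hp
  simp only [Set.mem_preimage, Set.mem_singleton_iff] at hp
  have hfz : f 0 = 0 := aux_fzero hf_hom
  have hp0 : p ≠ 0 := by
    intro h; rw [h, hfz] at hp; norm_num at hp
  set g := gradf p with hgdef
  have hg : HasGradientAt f g p := hf_grad p hp0
  have hgp : ⟪g, p⟫ = 1 := by rw [aux_euler hf_hom hg, hp]
  have hg0 : g ≠ 0 := by
    intro he; rw [he, inner_zero_left] at hgp; norm_num at hgp
  have hng : 0 < ‖g‖ := norm_pos_iff.2 hg0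
  have hK := aux_compact hd hf_cont hf_hom hf_pos
  obtain ⟨R0, hR0⟩ := hK.isBounded.subset_closedBall 0
  set R := max R0 1 with hRdef
  have hR1 : (1:ℝ) ≤ R := le_max_right _ _
  have hRpos : (0:ℝ) < R := by linarith
  have hRK : ∀ x, f x ≤ 1 → ‖x‖ ≤ R := by
    intro x hx
    have h1 := hR0 hx
    rw [Metric.mem_closedBall, dist_zero_right] at h1
    exact h1.trans (le_max_left _ _)
  rw [Metric.mem_closure_iff]
  intro ε hε
  -- strict separation bound on the complement of the ε-ball
  obtain ⟨M, hM1, hMbound⟩ : ∃ M : ℝ, M < 1 ∧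
      ∀ x, f x ≤ 1 → ε ≤ dist p x → ⟪g, x⟫ ≤ M := by
    set C := {x : EuclideanSpace ℝ (Fin d) | f x ≤ 1} ∩ {x | ε ≤ dist p x} with hCdef
    rcases C.eq_empty_or_nonempty with hCe | hCne
    · refine ⟨0, by norm_num, fun x h1 h2 => absurd ?_ (Set.notMem_empty x)⟩
      rw [← hCe]; exact ⟨h1, h2⟩
    · have hCcl : IsClosed {x : EuclideanSpace ℝ (Fin d) | ε ≤ dist p x} :=
        isClosed_le continuous_const (continuous_const.dist continuous_id)
      have hCcomp : IsCompact C := hK.inter_right hCcl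
      have hcont : ContinuousOn (fun x : EuclideanSpace ℝ (Fin d) => ⟪g, x⟫) C :=
        (continuous_const.inner continuous_id).continuousOn
      obtain ⟨x0, hx0C, hx0max⟩ := hCcomp.exists_isMaxOn hCne hcont
      refine ⟨⟪g, x0⟫, ?_, fun x h1 h2 => hx0max ⟨h1, h2⟩⟩
      have hx0p : x0 ≠ p := by
        intro he
        have h2 := hx0C.2
        rw [he] at h2
        simp only [Set.mem_setOf_eq, dist_self] at h2
        linarith
      exact aux_strict hf_hom hf_pos hconv hp hg hx0C.1 hx0p
  have h1M : 0 < 1 - M := by linarith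
  set η := min ((1 - M) / (4 * R)) (‖g‖ / 2) with hηdef
  have hη : 0 < η := lt_min (by positivity) (by positivity)
  have hη1 : η ≤ (1 - M) / (4 * R) := min_le_left _ _
  have hη2 : η ≤ ‖g‖ / 2 := min_le_right _ _
  -- rational approximation of g
  obtain ⟨n, hn⟩ := exists_nat_gt (Real.sqrt d / (2 * η))
  have hnpos : 0 < n := by
    by_contra h
    push_neg at h
    interval_cases n
    simp only [Nat.cast_zero] at hn
    have : 0 ≤ Real.sqrt d / (2 * η) := by positivity
    linarith
  have hnR : (0:ℝ) < n := Nat.cast_pos.2 hnpos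
  set k : Fin d → ℤ := fun i => round ((n : ℝ) * g i) with hkdef
  set u := ((n : ℝ)⁻¹) • intVec k with hudef
  have hcoord : ∀ i, ‖(u - g) i‖ ≤ 1 / (2 * n) := by
    intro i
    have hui : (u - g) i = (n : ℝ)⁻¹ * (k i) - g i := by
      simp [hudef, intVec, PiLp.sub_apply, PiLp.smul_apply, smul_eq_mul]
    rw [hui]
    have heq2 : (n : ℝ)⁻¹ * (k i) - g i = (n : ℝ)⁻¹ * ((k i) - n * g i) := by
      field_simp
    rw [Real.norm_eq_abs, heq2, abs_mul, abs_of_pos (inv_pos.2 hnR)]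
    have habs : |((k i : ℝ)) - n * g i| ≤ 1 / 2 := by
      rw [abs_sub_comm, hkdef]
      exact abs_sub_round _
    calc (n : ℝ)⁻¹ * |((k i : ℝ)) - n * g i| ≤ (n : ℝ)⁻¹ * (1/2) :=
          mul_le_mul_of_nonneg_left habs (by positivity)
      _ = 1 / (2 * n) := by field_simp
  have hnorm : ‖u - g‖ ≤ Real.sqrt d * (1 / (2 * n)) := by
    rw [EuclideanSpace.norm_eq]
    have hsum : (∑ i, ‖(u - g) i‖ ^ 2) ≤ (d : ℝ) * (1 / (2 * n)) ^ 2 := by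
      calc (∑ i, ‖(u - g) i‖ ^ 2) ≤ ∑ _i : Fin d, (1 / (2 * (n:ℝ))) ^ 2 := by
            apply Finset.sum_le_sum
            intro i _
            have := hcoord i
            have hnn : (0:ℝ) ≤ ‖(u - g) i‖ := norm_nonneg _
            nlinarith
        _ = (d : ℝ) * (1 / (2 * n)) ^ 2 := by
            rw [Finset.sum_const, Finset.card_univ, Fintype.card_fin, nsmul_eq_mul]
    calc Real.sqrt (∑ i, ‖(u - g) i‖ ^ 2) ≤ Real.sqrt ((d : ℝ) * (1 / (2 * n)) ^ 2) :=
          Real.sqrt_le_sqrt hsum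
      _ = Real.sqrt d * (1 / (2 * n)) := by
          rw [Real.sqrt_mul (by positivity), Real.sqrt_sq (by positivity)]
  have hlt : Real.sqrt d * (1 / (2 * n)) < η := by
    rw [div_lt_iff₀ (by positivity)] at hn
    calc Real.sqrt d * (1 / (2 * n)) = Real.sqrt d / (2 * n) := by ring
      _ < η := by
        rw [div_lt_iff₀ (by positivity)]
        calc Real.sqrt d < n * (2 * η) := hn
          _ = η * (2 * n) := by ring
  have hclose : ‖u - g‖ < η := lt_of_le_of_lt hnorm hlt
  -- the integer vector is nonzero
  have hv0 : intVec k ≠ 0 := by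
    intro he
    rw [hudef, he, smul_zero] at hclose
    rw [zero_sub, norm_neg] at hclose
    have : η ≤ ‖g‖ / 2 := hη2
    linarith [hng]
  -- the maximizer for the integer direction
  obtain ⟨q, hq1, hqmax, T, hT, hgrad⟩ :=
    aux_max hd hf_cont hf_hom hf_pos hf_grad (intVec k) hv0
  refine ⟨q, ⟨hq1, k, T, hT, hgrad⟩, ?_⟩
  -- show dist p q < ε
  by_contra hcon
  push_neg at hcon
  have hqM : ⟪g, q⟫ ≤ M := hMbound q hq1.le hcon
  have hqR : ‖q‖ ≤ R := hRK q hq1.le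
  have hpR : ‖p‖ ≤ R := hRK p hp.le
  have key1 : ⟪p, u⟫ ≤ ⟪q, u⟫ := by
    rw [hudef, real_inner_smul_right, real_inner_smul_right]
    exact mul_le_mul_of_nonneg_left (hqmax p hp.le) (by positivity)
  have key2 : |⟪q, u - g⟫| ≤ R * η := by
    calc |⟪q, u - g⟫| ≤ ‖q‖ * ‖u - g‖ := abs_real_inner_le_norm _ _
      _ ≤ R * η := by
        apply mul_le_mul hqR hclose.le (norm_nonneg _) hRpos.le
  have key3 : |⟪p, u - g⟫| ≤ R * η := by
    calc |⟪p, u - g⟫| ≤ ‖p‖ * ‖u - g‖ := abs_real_inner_le_norm _ _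
      _ ≤ R * η := by
        apply mul_le_mul hpR hclose.le (norm_nonneg _) hRpos.le
  have hqg : ⟪q, g⟫ = ⟪q, u⟫ - ⟪q, u - g⟫ := by
    rw [inner_sub_right]; ring
  have hpg : ⟪p, u⟫ = ⟪p, g⟫ + ⟪p, u - g⟫ := by
    rw [inner_sub_right]; ring
  have hpg1 : ⟪p, g⟫ = 1 := by rw [real_inner_comm]; exact hgp
  have hgq' : ⟪g, q⟫ = ⟪q, g⟫ := real_inner_comm _ _
  have hRη : 2 * (R * η) ≤ (1 - M) / 2 := by
    have : R * η ≤ R * ((1 - M) / (4 * R)) := mul_le_mul_of_nonneg_left hη1 hRpos.le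
    have heq3 : R * ((1 - M) / (4 * R)) = (1 - M) / 4 := by field_simp
    linarith [heq3 ▸ this]
  have habs2 := abs_le.1 key2
  have habs3 := abs_le.1 key3
  have : ⟪g, q⟫ ≥ 1 - 2 * (R * η) := by
    rw [hgq', hqg]
    have h5 : ⟪p, u⟫ ≥ 1 - R * η := by rw [hpg, hpg1]; linarith [habs3.1]
    linarith [key1, habs2.2]
  linarith
end

section
/- In the convex homogeneous setup, for every x ∈ E the number f x is the least upper bound (IsLUB) of the set { ⟪x, q⟫ | q ∈ E, sSup { ⟪p, q⟫ | p ∈ N } = 1 }. (Corollary 3.3: the homogeneous Legendre transform is an involution, L(Lf) = f, where Lf(q) = sup_{p∈N} ⟨p,q⟩ for the 1-homogeneous function f with strictly convex compact level set N = f⁻¹(1).) -/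
/-!
If `Lf(q) = 1` then `⟪p, q⟫ ≤ 1` on `N`; scaling `x ≠ 0` onto `N` gives `⟪x, q⟫ ≤ f x`.
The bound is attained by the gradient `q = ∇f(p)` at `p = (f x)⁻¹ • x ∈ N`: Euler's identity gives
`⟪p, q⟫ = f p = 1`, and since `p` maximizes `f` on the convex set `K`, the first-order condition
`⟪q, y - p⟫ ≤ 0` on `K` shows `Lf(q) = 1`.
-/

open scoped RealInnerProductSpace

section

variable {E : Type*} [NormedAddCommGroup E] [InnerProductSpace ℝ E] {f : E → ℝ}

variable (f) in
noncomputable def homogeneousLegendre (q : E) : ℝ :=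
  sSup {s : ℝ | ∃ p, f p = 1 ∧ s = ⟪p, q⟫}

section Homogeneous

variable (hom : ∀ t : ℝ, 0 < t → ∀ x, f (t • x) = t * f x) (hpos : ∀ x, x ≠ 0 → 0 < f x)
include hom

theorem map_zero_of_homogeneous : f 0 = 0 := by
  have := hom 2 two_pos 0
  rw [smul_zero] at this
  linarith

include hpos

theorem map_inv_smul_self_of_homogeneous {x : E} (hx : x ≠ 0) : f ((f x)⁻¹ • x) = 1 := by
  have hfx := hpos x hx
  rw [hom _ (inv_pos.mpr hfx), inv_mul_cancel₀ hfx.ne']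

theorem inner_le_of_homogeneousLegendre_eq_one {q : E} (hq : homogeneousLegendre f q = 1)
    (x : E) : ⟪x, q⟫ ≤ f x := by
  rcases eq_or_ne x 0 with rfl | hx
  · simp [map_zero_of_homogeneous hom]
  -- a set of reals that is not bounded above has `sSup` equal to `0`, not `1`
  have hbdd : BddAbove {s : ℝ | ∃ p, f p = 1 ∧ s = ⟪p, q⟫} := by
    by_contra h
    have := Real.sSup_of_not_bddAbove h
    simp_all [homogeneousLegendre]
  have hle : ⟪(f x)⁻¹ • x, q⟫ ≤ 1 :=
    hq ▸ le_csSup hbdd ⟨_, map_inv_smul_self_of_homogeneous hom hpos hx, rfl⟩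
  rwa [real_inner_smul_left, inv_mul_le_iff₀ (hpos x hx), mul_one] at hle

end Homogeneous

section Gradient

variable [CompleteSpace E] {g p : E}

theorem HasGradientAt.inner_self_eq_of_homogeneous (hg : HasGradientAt f g p)
    (hom : ∀ t : ℝ, 0 < t → f (t • p) = t * f p) : ⟪g, p⟫ = f p := by
  have hray : HasDerivAt (fun t : ℝ => f (t • p)) ⟪g, p⟫ 1 := by
    have := hg.hasFDerivAt.comp_hasDerivAt_of_eq (1 : ℝ)
      ((hasDerivAt_id (1 : ℝ)).smul_const p) (one_smul ℝ p).symm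
    simp only [id, one_smul, InnerProductSpace.toDual_apply_apply] at this
    exact this
  have hlin : HasDerivAt (fun t : ℝ => f (t • p)) (f p) 1 :=
    ((hasDerivAt_id (1 : ℝ)).mul_const (f p)).congr_of_eventuallyEq
      (by filter_upwards [eventually_gt_nhds one_pos] with t ht using hom t ht) |>.congr_deriv
      (one_mul _)
  exact hray.unique hlin

theorem IsMaxOn.inner_le_inner_of_hasGradientAt {K : Set E} {y : E} (hmax : IsMaxOn f K p)
    (hg : HasGradientAt f g p) (hK : Convex ℝ K) (hp : p ∈ K) (hy : y ∈ K) :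
    ⟪g, y⟫ ≤ ⟪g, p⟫ := by
  have := hmax.localize.hasFDerivWithinAt_nonpos hg.hasFDerivAt.hasFDerivWithinAt
    (sub_mem_posTangentConeAt_of_segment_subset (hK.segment_subset hp hy))
  simpa [inner_sub_right] using this

theorem homogeneousLegendre_gradient_eq_one (hg : HasGradientAt f g p)
    (hom : ∀ t : ℝ, 0 < t → f (t • p) = t * f p) (hK : Convex ℝ {x | f x ≤ 1}) (hp : f p = 1) :
    homogeneousLegendre f g = 1 := by
  have hmax : IsMaxOn f {x | f x ≤ 1} p := fun y hy => hp ▸ hy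
  have heuler : ⟪g, p⟫ = 1 := by rw [hg.inner_self_eq_of_homogeneous hom, hp]
  refine IsGreatest.csSup_eq ⟨⟨p, hp, by rw [real_inner_comm, heuler]⟩, ?_⟩
  rintro s ⟨y, hy, rfl⟩
  rw [real_inner_comm, ← heuler]
  exact hmax.inner_le_inner_of_hasGradientAt hg hK hp.le hy.le

theorem exists_homogeneousLegendre_eq_one_inner_eq [Nontrivial E] (gradf : E → E)
    (hom : ∀ t : ℝ, 0 < t → ∀ x, f (t • x) = t * f x) (hpos : ∀ x, x ≠ 0 → 0 < f x)
    (hgrad : ∀ x, x ≠ 0 → HasGradientAt f (gradf x) x) (hK : Convex ℝ {x | f x ≤ 1}) (x : E) :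
    ∃ q, homogeneousLegendre f q = 1 ∧ ⟪x, q⟫ = f x := by
  -- the gradient at the radial projection `(f y)⁻¹ • y` of `y ≠ 0` onto `f⁻¹' {1}` works for `y`
  have key : ∀ y, y ≠ 0 → ∃ q, homogeneousLegendre f q = 1 ∧ ⟪y, q⟫ = f y := by
    intro y hy
    set p := (f y)⁻¹ • y
    have hp : f p = 1 := map_inv_smul_self_of_homogeneous hom hpos hy
    have hp0 : p ≠ 0 := fun h => by simp [h, map_zero_of_homogeneous hom] at hp
    have hg := hgrad p hp0
    refine ⟨gradf p, homogeneousLegendre_gradient_eq_one hg (fun t ht => hom t ht p) hK hp, ?_⟩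
    have heuler : ⟪p, gradf p⟫ = 1 := by
      rw [real_inner_comm, hg.inner_self_eq_of_homogeneous (fun t ht => hom t ht p), hp]
    rw [real_inner_smul_left, inv_mul_eq_one₀ (hpos y hy).ne'] at heuler
    exact heuler.symm
  rcases eq_or_ne x 0 with rfl | hx
  · obtain ⟨y, hy⟩ := exists_ne (0 : E)
    obtain ⟨q, hq, -⟩ := key y hy
    exact ⟨q, hq, by simp [map_zero_of_homogeneous hom]⟩
  · exact key x hx

end Gradient

end

theorem homogeneous_legendre_involution_general (d : ℕ) (hd : 1 ≤ d)
    (f : EuclideanSpace ℝ (Fin d) → ℝ)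
    (gradf : EuclideanSpace ℝ (Fin d) → EuclideanSpace ℝ (Fin d))
    (hf_hom : ∀ t : ℝ, 0 < t → ∀ x, f (t • x) = t * f x)
    (hf_pos : ∀ x : EuclideanSpace ℝ (Fin d), x ≠ 0 → 0 < f x)
    (hf_grad : ∀ x : EuclideanSpace ℝ (Fin d), x ≠ 0 → HasGradientAt f (gradf x) x)
    (hconv : StrictConvex ℝ {x : EuclideanSpace ℝ (Fin d) | f x ≤ 1})
    (x : EuclideanSpace ℝ (Fin d)) :
    IsLUB {r : ℝ | ∃ q : EuclideanSpace ℝ (Fin d),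
        sSup {s : ℝ | ∃ p, f p = 1 ∧ s = ⟪p, q⟫} = 1 ∧ r = ⟪x, q⟫}
      (f x) := by
  have : Nonempty (Fin d) := Fin.pos_iff_nonempty.mp hd
  refine ⟨?_, fun b hb => ?_⟩
  · rintro r ⟨q, hq, rfl⟩
    exact inner_le_of_homogeneousLegendre_eq_one hf_hom hf_pos hq x
  · obtain ⟨q, hq, hqx⟩ :=
      exists_homogeneousLegendre_eq_one_inner_eq gradf hf_hom hf_pos hf_grad hconv.convex x
    exact hb ⟨q, hq, hqx.symm⟩

/-- **Corollary 3.3 (involutivity of the homogeneous Legendre transform), `L(Lf) = f`.**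
In the convex homogeneous setup, for every `x` the value `f x` is the least upper bound of
`{ ⟨x, q⟩ | Lf(q) = 1 }`, where `Lf(q) = sup_{p ∈ N} ⟨p, q⟩` and `N = f⁻¹(1)`. -/
theorem homogeneous_legendre_involution (d : ℕ) (hd : 1 ≤ d)
    (f : EuclideanSpace ℝ (Fin d) → ℝ)
    (gradf : EuclideanSpace ℝ (Fin d) → EuclideanSpace ℝ (Fin d))
    (hf_cont : Continuous f)
    (hf_hom : ∀ t : ℝ, 0 < t → ∀ x, f (t • x) = t * f x)
    (hf_pos : ∀ x : EuclideanSpace ℝ (Fin d), x ≠ 0 → 0 < f x)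
    (hf_grad : ∀ x : EuclideanSpace ℝ (Fin d), x ≠ 0 → HasGradientAt f (gradf x) x)
    (hgrad_cont : ContinuousOn gradf {x : EuclideanSpace ℝ (Fin d) | x ≠ 0})
    (hconv : StrictConvex ℝ {x : EuclideanSpace ℝ (Fin d) | f x ≤ 1})
    (x : EuclideanSpace ℝ (Fin d)) :
    IsLUB {r : ℝ | ∃ q : EuclideanSpace ℝ (Fin d),
        sSup {s : ℝ | ∃ p, f p = 1 ∧ s = ⟪p, q⟫} = 1 ∧ r = ⟪x, q⟫}
      (f x) :=
  homogeneous_legendre_involution_general d hd f gradf hf_hom hf_pos hf_grad hconv x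
end
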